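/- Small gain lemma with uniqueness: if behaviors R and S have Cauchy gains γ₁, γ₂ and incremental limit gains κ₁, κ₂, with γ₁∘γ₂ < id and κ₁∘κ₂ < id on (0,∞), then there exist fixed points ū ∈ U and ȳ ∈ Y such that every (ω,η) with (ω,η) ∈ R, (η,ω) ∈ S, and ‖ω‖_aa < ∞ satisfies lim ω = ū and lim η = ȳ, provided at least one such pair exists. -/

import Mathlib

/-!
On a closed loop `(ω, η) ∈ R`, `(η, ω) ∈ S` the Cauchy gains give `‖η‖_aa ≤ γ₁ ‖ω‖_aa` and
`‖ω‖_aa ≤ γ₂ ‖η‖_aa`; if `‖ω‖_aa < ∞`, the small-gain condition leaves only `‖ω‖_aa = ‖η‖_aa = 0`,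
so both signals are Cauchy and converge. For two closed loops, the incremental limit gains give the
same pair of inequalities between `dist u₁ u₂` and `dist y₁ y₂` for their limits, and
`κ₁ ∘ κ₂ < id` forces both distances to vanish.
-/

open Filter
open scoped NNReal ENNReal

/-- Asymptotic amplitude of a signal `ω : ℝ≥0 → M`:
`‖ω‖_aa = lim_{T→∞} sup_{t,s ≥ T} dist (ω t) (ω s)`. -/
noncomputable def asympAmp {M : Type*} [PseudoMetricSpace M] (ω : ℝ≥0 → M) : ℝ≥0∞ :=
  Filter.limsup (fun p : ℝ≥0 × ℝ≥0 => edist (ω p.1) (ω p.2)) (atTop ×ˢ atTop)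

/-- A behavior with input-value space `U` and output-value space `Y`: a relation between
`U`-valued and `Y`-valued signals. -/
abbrev Behavior (U Y : Type*) := Set ((ℝ≥0 → U) × (ℝ≥0 → Y))

/-- Class `K∞` functions: continuous, strictly increasing, unbounded, vanishing at `0`. -/
def KInfty (γ : ℝ≥0 → ℝ≥0) : Prop :=
  Continuous γ ∧ StrictMono γ ∧ γ 0 = 0 ∧ Tendsto γ atTop atTop

/-- Extension of a gain function to `[0,∞]`, sending `∞` to `∞`. -/
noncomputable def extGain (γ : ℝ≥0 → ℝ≥0) : ℝ≥0∞ → ℝ≥0∞ :=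
  fun x => if x = ⊤ then ⊤ else (γ x.toNNReal : ℝ≥0∞)

/-- `R` has Cauchy gain `γ` : `‖η‖_aa ≤ γ (‖ω‖_aa)` for all `(ω, η) ∈ R`. -/
def HasCauchyGain {U Y : Type*} [MetricSpace U] [MetricSpace Y]
    (R : Behavior U Y) (γ : ℝ≥0 → ℝ≥0) : Prop :=
  ∀ p ∈ R, asympAmp p.2 ≤ extGain γ (asympAmp p.1)

/-- `R` has incremental limit gain `κ` : whenever both inputs converge,
`limsup_{t→∞} dist (η₁ t) (η₂ t) ≤ κ (dist ω₁^∞ ω₂^∞)`. -/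
def HasIncrLimitGain {U Y : Type*} [MetricSpace U] [MetricSpace Y]
    (R : Behavior U Y) (κ : ℝ≥0 → ℝ≥0) : Prop :=
  ∀ p q, p ∈ R → q ∈ R → ∀ u₁ u₂ : U,
    Tendsto p.1 atTop (nhds u₁) → Tendsto q.1 atTop (nhds u₂) →
    Filter.limsup (fun t => edist (p.2 t) (q.2 t)) atTop ≤ (κ (nndist u₁ u₂) : ℝ≥0∞)

lemma eq_zero_of_small_gain {γ₁ γ₂ : ℝ≥0 → ℝ≥0} (hγ₁ : Monotone γ₁) (hγ₂ : γ₂ 0 = 0)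
    (hsg : ∀ r : ℝ≥0, 0 < r → γ₁ (γ₂ r) < r) {a b : ℝ≥0} (hb : b ≤ γ₁ a) (ha : a ≤ γ₂ b) :
    a = 0 ∧ b = 0 := by
  have hb0 : b = 0 := by
    by_contra hne
    exact (hb.trans (hγ₁ ha)).not_gt (hsg b (pos_iff_ne_zero.mpr hne))
  exact ⟨nonpos_iff_eq_zero.mp (hγ₂ ▸ hb0 ▸ ha), hb0⟩

lemma extGain_coe (γ : ℝ≥0 → ℝ≥0) (x : ℝ≥0) : extGain γ x = γ x := by
  simp [extGain]

lemma eq_zero_of_small_extGain {γ₁ γ₂ : ℝ≥0 → ℝ≥0} (hγ₁ : Monotone γ₁) (hγ₂ : γ₂ 0 = 0)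
    (hsg : ∀ r : ℝ≥0, 0 < r → γ₁ (γ₂ r) < r) {a b : ℝ≥0∞} (ha_ne_top : a ≠ ⊤)
    (hb : b ≤ extGain γ₁ a) (ha : a ≤ extGain γ₂ b) : a = 0 ∧ b = 0 := by
  lift a to ℝ≥0 using ha_ne_top
  rw [extGain_coe] at hb
  lift b to ℝ≥0 using ne_top_of_le_ne_top ENNReal.coe_ne_top hb
  rw [extGain_coe] at ha
  exact_mod_cast eq_zero_of_small_gain hγ₁ hγ₂ hsg (mod_cast hb) (mod_cast ha)

lemma cauchySeq_of_asympAmp_eq_zero {M : Type*} [PseudoMetricSpace M] {ω : ℝ≥0 → M}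
    (h : asympAmp ω = 0) : CauchySeq ω := by
  refine EMetric.cauchySeq_iff.mpr fun ε hε => ?_
  have hev := eventually_lt_of_limsup_lt (h.trans_lt hε)
  rw [prod_atTop_atTop_eq] at hev
  obtain ⟨N, hN⟩ := eventually_atTop.mp hev
  exact ⟨max N.1 N.2, fun m hm n hn => hN (m, n) ⟨le_of_max_le_left hm, le_of_max_le_right hn⟩⟩

lemma exists_tendsto_of_small_gain {U Y : Type*} [MetricSpace U] [MetricSpace Y]
    [CompleteSpace U] [CompleteSpace Y] {R : Behavior U Y} {S : Behavior Y U}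
    {γ₁ γ₂ : ℝ≥0 → ℝ≥0} (hγ₁ : Monotone γ₁) (hγ₂ : γ₂ 0 = 0)
    (hR : HasCauchyGain R γ₁) (hS : HasCauchyGain S γ₂)
    (hsg : ∀ r : ℝ≥0, 0 < r → γ₁ (γ₂ r) < r) {ω : ℝ≥0 → U} {η : ℝ≥0 → Y}
    (hωη : (ω, η) ∈ R) (hηω : (η, ω) ∈ S) (hω : asympAmp ω ≠ ⊤) :
    (∃ u, Tendsto ω atTop (nhds u)) ∧ ∃ y, Tendsto η atTop (nhds y) := by
  obtain ⟨hω0, hη0⟩ := eq_zero_of_small_extGain hγ₁ hγ₂ hsg hω (hR (ω, η) hωη) (hS (η, ω) hηω)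
  exact ⟨cauchySeq_tendsto_of_complete (cauchySeq_of_asympAmp_eq_zero hω0),
    cauchySeq_tendsto_of_complete (cauchySeq_of_asympAmp_eq_zero hη0)⟩

lemma HasIncrLimitGain.nndist_le {U Y : Type*} [MetricSpace U] [MetricSpace Y]
    {R : Behavior U Y} {κ : ℝ≥0 → ℝ≥0} (hR : HasIncrLimitGain R κ) {p q : (ℝ≥0 → U) × (ℝ≥0 → Y)}
    (hp : p ∈ R) (hq : q ∈ R) {u₁ u₂ : U} {y₁ y₂ : Y}
    (hu₁ : Tendsto p.1 atTop (nhds u₁)) (hu₂ : Tendsto q.1 atTop (nhds u₂))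
    (hy₁ : Tendsto p.2 atTop (nhds y₁)) (hy₂ : Tendsto q.2 atTop (nhds y₂)) :
    nndist y₁ y₂ ≤ κ (nndist u₁ u₂) := by
  have h := hR p q hp hq u₁ u₂ hu₁ hu₂
  rw [(hy₁.edist hy₂).limsup_eq, edist_nndist] at h
  exact_mod_cast h

lemma limits_eq_of_small_incr_gain {U Y : Type*} [MetricSpace U] [MetricSpace Y]
    {R : Behavior U Y} {S : Behavior Y U} {κ₁ κ₂ : ℝ≥0 → ℝ≥0} (hκ₁ : Monotone κ₁)
    (hκ₂ : κ₂ 0 = 0) (hR : HasIncrLimitGain R κ₁) (hS : HasIncrLimitGain S κ₂)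
    (hsg : ∀ r : ℝ≥0, 0 < r → κ₁ (κ₂ r) < r) {ω₁ ω₂ : ℝ≥0 → U} {η₁ η₂ : ℝ≥0 → Y}
    (hR₁ : (ω₁, η₁) ∈ R) (hS₁ : (η₁, ω₁) ∈ S) (hR₂ : (ω₂, η₂) ∈ R) (hS₂ : (η₂, ω₂) ∈ S)
    {u₁ u₂ : U} {y₁ y₂ : Y} (hu₁ : Tendsto ω₁ atTop (nhds u₁)) (hu₂ : Tendsto ω₂ atTop (nhds u₂))
    (hy₁ : Tendsto η₁ atTop (nhds y₁)) (hy₂ : Tendsto η₂ atTop (nhds y₂)) :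
    u₁ = u₂ ∧ y₁ = y₂ := by
  obtain ⟨hu, hy⟩ := eq_zero_of_small_gain hκ₁ hκ₂ hsg
    (hR.nndist_le hR₁ hR₂ hu₁ hu₂ hy₁ hy₂) (hS.nndist_le hS₁ hS₂ hy₁ hy₂ hu₁ hu₂)
  exact ⟨nndist_eq_zero.mp hu, nndist_eq_zero.mp hy⟩

/-- Small gain lemma for asymptotic amplitude, with uniqueness of the limits. -/
theorem stmt3 {U Y : Type*} [MetricSpace U] [MetricSpace Y]
    [CompleteSpace U] [CompleteSpace Y]
    (R : Behavior U Y) (S : Behavior Y U) (γ₁ γ₂ κ₁ κ₂ : ℝ≥0 → ℝ≥0)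
    (hγ₁ : KInfty γ₁) (hγ₂ : KInfty γ₂) (hκ₁ : KInfty κ₁) (hκ₂ : KInfty κ₂)
    (hR : HasCauchyGain R γ₁) (hS : HasCauchyGain S γ₂)
    (hRi : HasIncrLimitGain R κ₁) (hSi : HasIncrLimitGain S κ₂)
    (hsg : ∀ r : ℝ≥0, 0 < r → γ₁ (γ₂ r) < r)
    (hsg' : ∀ r : ℝ≥0, 0 < r → κ₁ (κ₂ r) < r)
    (hne : ∃ (ω : ℝ≥0 → U) (η : ℝ≥0 → Y),
      (ω, η) ∈ R ∧ (η, ω) ∈ S ∧ asympAmp ω ≠ ⊤) :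
    ∃ (ubar : U) (ybar : Y), ∀ (ω : ℝ≥0 → U) (η : ℝ≥0 → Y),
      (ω, η) ∈ R → (η, ω) ∈ S → asympAmp ω ≠ ⊤ →
      Tendsto ω atTop (nhds ubar) ∧ Tendsto η atTop (nhds ybar) := by
  obtain ⟨ω₀, η₀, hR₀, hS₀, hω₀⟩ := hne
  obtain ⟨⟨u₀, hu₀⟩, y₀, hy₀⟩ :=
    exists_tendsto_of_small_gain hγ₁.2.1.monotone hγ₂.2.2.1 hR hS hsg hR₀ hS₀ hω₀
  refine ⟨u₀, y₀, fun ω η hωη hηω hω => ?_⟩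
  obtain ⟨⟨u, hu⟩, y, hy⟩ :=
    exists_tendsto_of_small_gain hγ₁.2.1.monotone hγ₂.2.2.1 hR hS hsg hωη hηω hω
  obtain ⟨rfl, rfl⟩ := limits_eq_of_small_incr_gain hκ₁.2.1.monotone hκ₂.2.2.1 hRi hSi hsg'
    hωη hηω hR₀ hS₀ hu hu₀ hy hy₀
  exact ⟨hu, hy⟩
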